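/- For integers r ≥ s ≥ 3 with r ≤ 2s − 2, gcd(r,s) > 1, and r ≥ s + s/gcd(r,s) − 1, the minimum n such that every coloring Δ : [1,n] → ℤ admits an s-element zero-sum mod s set S₁ and an r-element zero-sum mod r set S₂ with max(S₁) < min(S₂) and diam(S₁) ≤ diam(S₂), equals 4s + r − 3; in particular it coincides with the 2-coloring value f(s,r,2). -/

import Mathlib

open Finset

/-- diameter of a finite set of naturals -/
def diam (S : Finset ℕ) : ℕ := (S.max.getD 0) - (S.min.getD 0)

/-- S is monochromatic under a coloring -/
def Mono {α : Type*} (f : ℕ → α) (S : Finset ℕ) : Prop := ∀ a ∈ S, ∀ b ∈ S, f a = f b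

/-- S is zero-sum mod m under an integer coloring -/
def ZeroSum (f : ℕ → ℤ) (m : ℕ) (S : Finset ℕ) : Prop := (m : ℤ) ∣ ∑ x ∈ S, f x

/-- every element of S colored ∞ (= none) -/
def InftyMono (f : ℕ → Option ℤ) (S : Finset ℕ) : Prop := ∀ x ∈ S, f x = none

/-- S consists of ℤ-colored elements and is zero-sum mod m -/
def ZeroSumOpt (f : ℕ → Option ℤ) (m : ℕ) (S : Finset ℕ) : Prop :=
  (∀ x ∈ S, (f x).isSome) ∧ (m : ℤ) ∣ ∑ x ∈ S, (f x).getD 0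




section helpers

lemma diam_eq (S : Finset ℕ) (h : S.Nonempty) : diam S = S.max' h - S.min' h := by
  unfold diam
  rw [← Finset.coe_max' h, ← Finset.coe_min' h]; rfl

lemma diam_ge_of_mem {S : Finset ℕ} {x y : ℕ} (hx : x ∈ S) (hy : y ∈ S) :
    y - x ≤ diam S := by
  have h : S.Nonempty := ⟨x, hx⟩
  rw [diam_eq S h]
  have h1 := S.min'_le x hx
  have h2 := S.le_max' y hy
  omega

lemma subset_Icc_of_mem {S : Finset ℕ} (h : S.Nonempty) :
    S ⊆ Finset.Icc (S.min' h) (S.max' h) := by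
  intro x hx
  simp [Finset.mem_Icc, S.min'_le x hx, S.le_max' x hx]

lemma card_le_diam {S : Finset ℕ} (h : S.Nonempty) : S.card ≤ diam S + 1 := by
  have := Finset.card_le_card (subset_Icc_of_mem h)
  rw [Nat.card_Icc] at this
  rw [diam_eq S h]
  have h2 := S.le_max' _ (S.min'_mem h)
  omega

lemma diam_le_of_subset_Icc {S : Finset ℕ} {a b : ℕ} (h : S.Nonempty)
    (hS : S ⊆ Finset.Icc a b) : diam S ≤ b - a := by
  rw [diam_eq S h]
  have h1 := Finset.mem_Icc.mp (hS (S.min'_mem h))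
  have h2 := Finset.mem_Icc.mp (hS (S.max'_mem h))
  omega

lemma bounds_of_subset_Icc {S : Finset ℕ} {a b : ℕ} (h : S.Nonempty)
    (hS : S ⊆ Finset.Icc a b) : a ≤ S.min' h ∧ S.max' h ≤ b := by
  have h1 := Finset.mem_Icc.mp (hS (S.min'_mem h))
  have h2 := Finset.mem_Icc.mp (hS (S.max'_mem h))
  exact ⟨h1.1, h2.2⟩

lemma diam_Icc {a b : ℕ} (h : a ≤ b) : diam (Finset.Icc a b) = b - a := by
  have hne : (Finset.Icc a b).Nonempty := by rw [Finset.nonempty_Icc]; omega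
  rw [diam_eq _ hne]
  have h1 : (Finset.Icc a b).min' hne = a := by
    apply le_antisymm
    · exact Finset.min'_le _ _ (by simp [Finset.mem_Icc]; omega)
    · exact (bounds_of_subset_Icc hne (subset_refl _)).1
  have h2 : (Finset.Icc a b).max' hne = b := by
    apply le_antisymm
    · exact (bounds_of_subset_Icc hne (subset_refl _)).2
    · exact Finset.le_max' _ _ (by simp [Finset.mem_Icc]; omega)
  rw [h1, h2]

/-- EGZ on a finset of naturals -/
lemma egz (m : ℕ) (X : Finset ℕ) (Δ : ℕ → ℤ) (h : 2 * m - 1 ≤ X.card) :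
    ∃ T ⊆ X, T.card = m ∧ (m:ℤ) ∣ ∑ x ∈ T, Δ x := Int.erdos_ginzburg_ziv Δ h

/-- generalized EGZ: from m + k - 1 elements, k ∣ m, extract m elements with sum ≡ 0 mod k -/
lemma egz_gen (k : ℕ) (hk : 0 < k) : ∀ m : ℕ, k ∣ m → ∀ X : Finset ℕ, ∀ Δ : ℕ → ℤ,
    m + k - 1 ≤ X.card → ∃ T ⊆ X, T.card = m ∧ (k:ℤ) ∣ ∑ x ∈ T, Δ x := by
  intro m
  induction m using Nat.strong_induction_on with
  | _ m ih =>
    intro hkm X Δ hX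
    rcases Nat.eq_zero_or_pos m with hm | hm
    · exact ⟨∅, by simp [hm]⟩
    · have hkm' : k ≤ m := Nat.le_of_dvd hm hkm
      obtain ⟨T₁, hT₁X, hT₁c, hT₁d⟩ := egz k X Δ (by omega)
      have hdisj : ∀ T₂, T₂ ⊆ X \ T₁ → Disjoint T₁ T₂ :=
        fun T₂ hT₂X => Finset.disjoint_left.mpr
          (fun x hx1 hx2 => (Finset.mem_sdiff.mp (hT₂X hx2)).2 hx1)
      obtain ⟨T₂, hT₂X, hT₂c, hT₂d⟩ := ih (m - k) (by omega) (Nat.dvd_sub hkm dvd_rfl)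
        (X \ T₁) Δ (by rw [Finset.card_sdiff_of_subset hT₁X, hT₁c]; omega)
      refine ⟨T₁ ∪ T₂, ?_, ?_, ?_⟩
      · intro x hx; rcases Finset.mem_union.mp hx with h | h
        · exact hT₁X h
        · exact (Finset.mem_sdiff.mp (hT₂X h)).1
      · rw [Finset.card_union_of_disjoint (hdisj T₂ hT₂X), hT₁c, hT₂c]; omega
      · rw [Finset.sum_union (hdisj T₂ hT₂X)]
        exact dvd_add hT₁d hT₂d

end helpers

/-- class lemma: elements all congruent mod d, enough of them, give an s-subset div by s -/
lemma class_lemma {d s : ℕ} (hd : 0 < d) (hds : d ∣ s) (X : Finset ℕ) (Δ : ℕ → ℤ) (a : ℤ)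
    (hX : s + s / d - 1 ≤ X.card) (hs : 0 < s) (hcl : ∀ x ∈ X, (d:ℤ) ∣ Δ x - a) :
    ∃ T ⊆ X, T.card = s ∧ (s:ℤ) ∣ ∑ x ∈ T, Δ x := by
  obtain ⟨s', hss'⟩ := hds
  have hdiv : s / d = s' := by rw [hss']; exact Nat.mul_div_cancel_left s' hd
  rw [hdiv] at hX
  have hs'dvd : s' ∣ s := ⟨d, by rw [hss']; ring⟩
  have hs'pos : 0 < s' := by
    rcases Nat.eq_zero_or_pos s' with h | h
    · rw [h, Nat.mul_zero] at hss'; omega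
    · exact h
  obtain ⟨T, hTX, hTc, hTd⟩ := egz_gen s' hs'pos s hs'dvd X (fun x => (Δ x - a) / d) (by omega)
  refine ⟨T, hTX, hTc, ?_⟩
  have hsum : ∑ x ∈ T, Δ x = (s:ℤ) * a + d * ∑ x ∈ T, (Δ x - a) / d := by
    rw [Finset.mul_sum]
    have hcong : ∀ x ∈ T, Δ x = a + d * ((Δ x - a) / d) := by
      intro x hx
      have := Int.mul_ediv_cancel' (hcl x (hTX hx))
      omega
    rw [Finset.sum_congr rfl hcong, Finset.sum_add_distrib]
    simp [hTc, mul_comm]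
  rw [hsum]
  apply dvd_add
  · exact Dvd.intro a rfl
  · obtain ⟨c, hc⟩ := hTd
    exact ⟨c, by rw [hc]; push_cast [hss']; ring⟩

section sums
variable {r : ℕ} (g : ℕ → ZMod r)

def zsums (Q : Finset ℕ) : Finset (ZMod r) := Q.powerset.image (fun T => ∑ i ∈ T, g i)

lemma mem_zsums {Q : Finset ℕ} {y : ZMod r} :
    y ∈ zsums g Q ↔ ∃ T ⊆ Q, ∑ i ∈ T, g i = y := by
  unfold zsums
  rw [Finset.mem_image]
  constructor
  · rintro ⟨T, hT, hs⟩; exact ⟨T, Finset.mem_powerset.mp hT, hs⟩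
  · rintro ⟨T, hT, hs⟩; exact ⟨T, Finset.mem_powerset.mpr hT, hs⟩

lemma zsums_insert {x : ℕ} {Q : Finset ℕ} (hx : x ∉ Q) :
    zsums g (insert x Q) = zsums g Q ∪ (zsums g Q).image (· + g x) := by
  ext y
  simp only [mem_zsums, Finset.mem_union, Finset.mem_image]
  constructor
  · rintro ⟨T, hTQ, hsum⟩
    by_cases hxT : x ∈ T
    · right
      refine ⟨∑ i ∈ T.erase x, g i, ⟨T.erase x, ?_, rfl⟩, ?_⟩
      · intro z hz
        have hz' := hTQ (Finset.mem_of_mem_erase hz)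
        rcases Finset.mem_insert.mp hz' with h | h
        · exact absurd h (Finset.ne_of_mem_erase hz)
        · exact h
      · rw [← hsum, ← Finset.add_sum_erase _ _ hxT]; ring
    · left
      refine ⟨T, fun z hz => ?_, hsum⟩
      rcases Finset.mem_insert.mp (hTQ hz) with h | h
      · exact absurd (h ▸ hz) hxT
      · exact h
  · rintro (⟨T, hTQ, hsum⟩ | ⟨w, ⟨T, hTQ, hsum⟩, hw⟩)
    · exact ⟨T, fun z hz => Finset.mem_insert_of_mem (hTQ hz), hsum⟩
    · refine ⟨insert x T, Finset.insert_subset_insert x hTQ, ?_⟩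
      rw [Finset.sum_insert (fun h => hx (hTQ h)), ← hw, ← hsum]; ring

lemma zsums_zero_mem (Q : Finset ℕ) : (0 : ZMod r) ∈ zsums g Q :=
  (mem_zsums g).mpr ⟨∅, Finset.empty_subset _, by simp⟩

lemma zsums_growth (P : Finset ℕ) (hg : ∀ T ⊆ P, T.Nonempty → ∑ i ∈ T, g i ≠ 0) :
    ∀ Q, Q ⊆ P → ∀ R, R ⊆ P → Disjoint Q R →
      (zsums g R).card + Q.card ≤ (zsums g (R ∪ Q)).card := by
  intro Q
  induction Q using Finset.induction_on with
  | empty => intro _ R _ _; simp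
  | @insert x Q hxQ ih =>
    intro hQP R hRP hdisj
    have hQP' : Q ⊆ P := (Finset.subset_insert x Q).trans hQP
    have hxP : x ∈ P := hQP (Finset.mem_insert_self x Q)
    have hxR : x ∉ R := Finset.disjoint_left.mp hdisj (Finset.mem_insert_self x Q)
    have hxRQ : x ∉ R ∪ Q := by simp [hxR, hxQ]
    have hdisj' : Disjoint Q R := hdisj.mono_left (Finset.subset_insert x Q)
    have hunion : R ∪ insert x Q = insert x (R ∪ Q) := by
      ext y; simp only [Finset.mem_union, Finset.mem_insert]; tauto
    rw [hunion, zsums_insert g hxRQ]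
    set S := zsums g (R ∪ Q) with hS
    have hkey : S.card + 1 ≤ (S ∪ S.image (· + g x)).card := by
      by_contra hcon
      push_neg at hcon
      have hsub : S ⊆ S ∪ S.image (· + g x) := Finset.subset_union_left
      have himsub : S.image (· + g x) ⊆ S := by
        have heq : S ∪ S.image (· + g x) = S :=
          (Finset.eq_of_subset_of_card_le hsub (by omega)).symm
        intro y hy
        rw [← heq]
        exact Finset.mem_union_right _ hy
      have himcard : (S.image (· + g x)).card = S.card :=
        Finset.card_image_of_injective _ (add_left_injective (g x))
      have himeq : S.image (· + g x) = S :=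
        Finset.eq_of_subset_of_card_le himsub (by omega)
      have h0 : (0 : ZMod r) ∈ S := zsums_zero_mem g _
      rw [← himeq] at h0
      obtain ⟨y, hyS, hy0⟩ := Finset.mem_image.mp h0
      obtain ⟨T, hTQ, hTsum⟩ := (mem_zsums g).mp hyS
      have hxT : x ∉ T := fun h => hxRQ (hTQ h)
      refine hg (insert x T)
        (Finset.insert_subset hxP (hTQ.trans (Finset.union_subset hRP hQP')))
        ⟨x, Finset.mem_insert_self x T⟩ ?_
      rw [Finset.sum_insert hxT, hTsum]
      rw [← hy0]; ring
    calc (zsums g R).card + (insert x Q).card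
        = (zsums g R).card + Q.card + 1 := by rw [Finset.card_insert_of_notMem hxQ]; ring
      _ ≤ S.card + 1 := by
          have h9 := ih hQP' R hRP hdisj'
          rw [← hS] at h9
          omega
      _ ≤ _ := hkey

/-- all elements of a large zero-sum-free indexed family are equal -/
lemma zsums_all_eq (P : Finset ℕ) (hr : 3 ≤ r) (hP : r ≤ P.card + 1)
    (hg : ∀ T ⊆ P, T.Nonempty → ∑ i ∈ T, g i ≠ 0) :
    ∀ i ∈ P, ∀ j ∈ P, g i = g j := by
  haveI : NeZero r := ⟨by omega⟩
  intro i hi j hj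
  by_contra hne
  have hij : i ≠ j := fun h => hne (h ▸ rfl)
  have h1 : g i ≠ 0 := by
    have := hg {i} (by simpa using hi) ⟨i, Finset.mem_singleton_self i⟩
    simpa using this
  have h2 : g j ≠ 0 := by
    have := hg {j} (by simpa using hj) ⟨j, Finset.mem_singleton_self j⟩
    simpa using this
  have h3 : g i + g j ≠ 0 := by
    have := hg {i, j} (by
      intro z hz
      rcases Finset.mem_insert.mp hz with h | h
      · exact h ▸ hi
      · exact (Finset.mem_singleton.mp h) ▸ hj) ⟨i, Finset.mem_insert_self i {j}⟩
    rwa [Finset.sum_pair hij] at this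
  set R : Finset ℕ := {i, j} with hR
  have hRP : R ⊆ P := by
    intro z hz
    rcases Finset.mem_insert.mp hz with h | h
    · exact h ▸ hi
    · exact (Finset.mem_singleton.mp h) ▸ hj
  have hsub4 : ({0, g i, g j, g i + g j} : Finset (ZMod r)) ⊆ zsums g R := by
    intro y hy
    rw [mem_zsums]
    simp only [Finset.mem_insert, Finset.mem_singleton] at hy
    rcases hy with h | h | h | h
    · exact ⟨∅, Finset.empty_subset _, by simp [h]⟩
    · exact ⟨{i}, by simp [hR], by simp [h]⟩
    · exact ⟨{j}, by simp [hR], by simp [h]⟩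
    · exact ⟨{i, j}, by simp [hR], by rw [Finset.sum_pair hij, h]⟩
  have hcard4 : ({0, g i, g j, g i + g j} : Finset (ZMod r)).card = 4 := by
    rw [Finset.card_insert_of_notMem (by
        simp only [Finset.mem_insert, Finset.mem_singleton]
        push_neg
        exact ⟨fun h => h1 h.symm, fun h => h2 h.symm, fun h => h3 h.symm⟩),
      Finset.card_insert_of_notMem (by
        simp only [Finset.mem_insert, Finset.mem_singleton]
        push_neg
        constructor
        · exact hne
        · intro h; apply h2; rw [eq_comm, ← sub_eq_zero] at h; simpa using h),
      Finset.card_insert_of_notMem (by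
        simp only [Finset.mem_singleton]
        intro h; apply h1; rw [eq_comm, ← sub_eq_zero] at h; simpa using h),
      Finset.card_singleton]
  have hgrow := zsums_growth g P hg (P \ R) Finset.sdiff_subset R hRP Finset.sdiff_disjoint
  rw [Finset.union_sdiff_of_subset hRP] at hgrow
  have hcard2 : R.card = 2 := by rw [hR]; exact Finset.card_pair hij
  have hPR : (P \ R).card = P.card - 2 := by rw [Finset.card_sdiff_of_subset hRP, hcard2]
  have h4le : 4 ≤ (zsums g R).card := by
    have := Finset.card_le_card hsub4
    omega
  have hub : (zsums g P).card ≤ r := by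
    have := Finset.card_le_univ (zsums g P)
    rwa [ZMod.card r] at this
  omega

end sums

section pairing
variable {r : ℕ} (Δ : ℕ → ℤ) {A B : Finset ℕ}

lemma mem_zsums' : True := trivial

-- single pairing: all differences Δ i - Δ (e i) are congruent mod r
lemma pairing_eq (hr : 3 ≤ r) (hA : A.card = r - 1) (hB : B.card = r - 1)
    (hforbid : ∀ U V : Finset ℕ, U ⊆ A → V ⊆ B → U.card = V.card → U.Nonempty →
      ¬ (r:ℤ) ∣ (∑ x ∈ V, Δ x - ∑ x ∈ U, Δ x))
    (e : {z // z ∈ A} ≃ {z // z ∈ B}) :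
    ∀ i : {z // z ∈ A}, ∀ j : {z // z ∈ A},
      ((Δ i.1 - Δ (e i).1 : ℤ) : ZMod r) = ((Δ j.1 - Δ (e j).1 : ℤ) : ZMod r) := by
  haveI : NeZero r := ⟨by omega⟩
  classical
  set φ : ℕ → ℕ := fun i => if h : i ∈ A then (e ⟨i, h⟩).1 else i with hφ
  set g : ℕ → ZMod r := fun i => if h : i ∈ A then ((Δ i - Δ (e ⟨i, h⟩).1 : ℤ) : ZMod r) else 0
    with hg
  have hinj : ∀ i ∈ A, ∀ j ∈ A, φ i = φ j → i = j := by
    intro i hi j hj hij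
    simp only [hφ, dif_pos hi, dif_pos hj] at hij
    have : e ⟨i, hi⟩ = e ⟨j, hj⟩ := Subtype.ext hij
    have := e.injective this
    exact congrArg Subtype.val this
  have hmain : ∀ i ∈ A, ∀ j ∈ A, g i = g j := by
    apply zsums_all_eq g A (by omega) (by omega)
    intro T hTA hTne
    have hsum : ∑ i ∈ T, g i = ((∑ i ∈ T, Δ i - ∑ i ∈ T, Δ (φ i) : ℤ) : ZMod r) := by
      rw [← Finset.sum_sub_distrib]
      push_cast
      apply Finset.sum_congr rfl
      intro i hi
      simp only [hg, dif_pos (hTA hi), hφ, dif_pos (hTA hi)]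
      push_cast
      ring
    rw [hsum]
    intro h0
    rw [ZMod.intCast_zmod_eq_zero_iff_dvd] at h0
    have himg : ∑ i ∈ T, Δ (φ i) = ∑ x ∈ T.image φ, Δ x :=
      (Finset.sum_image (fun i hi j hj => hinj i (hTA hi) j (hTA hj))).symm
    refine hforbid T (T.image φ) hTA ?_ ?_ hTne ?_
    · intro y hy
      obtain ⟨i, hiT, hyi⟩ := Finset.mem_image.mp hy
      rw [← hyi]
      simp only [hφ, dif_pos (hTA hiT)]
      exact (e ⟨i, hTA hiT⟩).2
    · exact (Finset.card_image_of_injOn (fun i hi j hj => hinj i (hTA hi) j (hTA hj))).symm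
    · rw [← himg]
      have : ∑ i ∈ T, Δ (φ i) - ∑ i ∈ T, Δ i = -(∑ i ∈ T, Δ i - ∑ i ∈ T, Δ (φ i)) := by ring
      rw [this]
      exact dvd_neg.mpr h0
  intro i j
  have := hmain i.1 i.2 j.1 j.2
  simp only [hg] at this
  rwa [dif_pos i.2, dif_pos j.2, Subtype.coe_eta, Subtype.coe_eta] at this

lemma pair_swap (hr : 3 ≤ r) (hA : A.card = r - 1) (hB : B.card = r - 1)
    (hforbid : ∀ U V : Finset ℕ, U ⊆ A → V ⊆ B → U.card = V.card → U.Nonempty →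
      ¬ (r:ℤ) ∣ (∑ x ∈ V, Δ x - ∑ x ∈ U, Δ x)) :
    ∀ x ∈ A, ∀ x' ∈ A, ∀ y ∈ B, ∀ y' ∈ B, x ≠ x' → y ≠ y' →
      ((r:ℤ) ∣ 2*(Δ x - Δ x')) ∧ ((r:ℤ) ∣ 2*(Δ y - Δ y')) := by
  haveI : NeZero r := ⟨by omega⟩
  classical
  intro x hx x' hx' y hy y' hy' hxx hyy
  set xa : {z // z ∈ A} := ⟨x, hx⟩
  set xa' : {z // z ∈ A} := ⟨x', hx'⟩
  set yb : {z // z ∈ B} := ⟨y, hy⟩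
  set yb' : {z // z ∈ B} := ⟨y', hy'⟩
  have e₀ : {z // z ∈ A} ≃ {z // z ∈ B} := Finset.equivOfCardEq (hA.trans hB.symm)
  set e₁ : {z // z ∈ A} ≃ {z // z ∈ B} := (Equiv.swap xa (e₀.symm yb)).trans e₀ with he₁
  have he₁x : e₁ xa = yb := by
    simp [he₁, Equiv.swap_apply_left]
  set e₂ : {z // z ∈ A} ≃ {z // z ∈ B} := (Equiv.swap xa' (e₁.symm yb')).trans e₁ with he₂
  have hxaw : xa ≠ e₁.symm yb' := by
    intro h
    apply hyy
    have : e₁ xa = yb' := by rw [h]; simp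
    rw [he₁x] at this
    exact congrArg Subtype.val this
  have hxaxa' : xa ≠ xa' := fun h => hxx (congrArg Subtype.val h)
  have he₂x : e₂ xa = yb := by
    simp only [he₂, Equiv.trans_apply]
    rw [Equiv.swap_apply_of_ne_of_ne hxaxa' hxaw, he₁x]
  have he₂x' : e₂ xa' = yb' := by
    simp only [he₂, Equiv.trans_apply]
    rw [Equiv.swap_apply_left]
    simp
  set e₃ : {z // z ∈ A} ≃ {z // z ∈ B} := (Equiv.swap xa xa').trans e₂ with he₃
  have he₃x : e₃ xa = yb' := by
    simp only [he₃, Equiv.trans_apply, Equiv.swap_apply_left]; exact he₂x'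
  have he₃x' : e₃ xa' = yb := by
    simp only [he₃, Equiv.trans_apply, Equiv.swap_apply_right]; exact he₂x
  have h2 := pairing_eq Δ hr hA hB hforbid e₂ xa xa'
  have h3 := pairing_eq Δ hr hA hB hforbid e₃ xa xa'
  rw [he₂x, he₂x'] at h2
  rw [he₃x, he₃x'] at h3
  -- h2 : cast (Δ x - Δ y) = cast (Δ x' - Δ y'), h3 : cast (Δ x - Δ y') = cast (Δ x' - Δ y)
  constructor
  · have : ((2*(Δ x - Δ x') : ℤ) : ZMod r) = 0 := by
      push_cast at h2 h3 ⊢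
      linear_combination h2 + h3
    rwa [ZMod.intCast_zmod_eq_zero_iff_dvd] at this
  · have : ((2*(Δ y - Δ y') : ℤ) : ZMod r) = 0 := by
      push_cast at h2 h3 ⊢
      linear_combination h3 - h2
    rwa [ZMod.intCast_zmod_eq_zero_iff_dvd] at this

end pairing

section force
variable {r M W nn : ℕ} (Δ : ℕ → ℤ)

/-- Step 4: the window [M+1, M+r] is forced to be zero-sum mod r -/
lemma force_left (hr : 3 ≤ r) (hW : r - 1 ≤ W)
    (hgeo : M + W + r ≤ nn)
    (hnoWide : ∀ Z : Finset ℕ, Z ⊆ Finset.Icc (M+1) nn → Z.card = r →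
      (r:ℤ) ∣ ∑ x ∈ Z, Δ x → W ≤ diam Z → False) :
    (r:ℤ) ∣ ∑ x ∈ Finset.Icc (M+1) (M+r), Δ x := by
  classical
  set Blk := Finset.Icc (M+1) (M+r) with hBlk
  set Cl := Finset.Icc (M+W+2) (M+W+r) with hCl
  have hdisj : Disjoint Blk Cl := by
    rw [Finset.disjoint_left]
    intro z hz hz'
    rw [hBlk, Finset.mem_Icc] at hz
    rw [hCl, Finset.mem_Icc] at hz'
    omega
  have hcardB : Blk.card = r := by rw [hBlk, Nat.card_Icc]; omega
  have hcardC : Cl.card = r - 1 := by rw [hCl, Nat.card_Icc]; omega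
  have hcardX : (Blk ∪ Cl).card = 2*r - 1 := by
    rw [Finset.card_union_of_disjoint hdisj, hcardB, hcardC]; omega
  obtain ⟨Z, hZX, hZc, hZd⟩ := egz r (Blk ∪ Cl) Δ (by omega)
  have hZne : Z.Nonempty := Finset.card_pos.mp (by omega)
  have hZIcc : Z ⊆ Finset.Icc (M+1) nn := by
    intro z hz
    rcases Finset.mem_union.mp (hZX hz) with h | h
    · rw [hBlk, Finset.mem_Icc] at h; rw [Finset.mem_Icc]; omega
    · rw [hCl, Finset.mem_Icc] at h; rw [Finset.mem_Icc]; omega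
  have hdZ : diam Z < W := by
    by_contra hcon
    exact hnoWide Z hZIcc hZc hZd (by omega)
  have hZBlk : Z ⊆ Blk := by
    by_contra hcon
    obtain ⟨z, hzZ, hzB⟩ := Finset.not_subset.mp hcon
    have hzC : z ∈ Cl := (Finset.mem_union.mp (hZX hzZ)).resolve_left hzB
    rw [hCl, Finset.mem_Icc] at hzC
    set a := Z.min' hZne with ha
    have hamem : Z.min' hZne ∈ Z := Z.min'_mem hZne
    have hmax : Z.max' hZne ∈ Z := Z.max'_mem hZne
    have hzle : z ≤ Z.max' hZne := Z.le_max' z hzZ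
    have hdiam : diam Z = Z.max' hZne - a := diam_eq Z hZne
    have hminle : a ≤ z := Z.min'_le z hzZ
    -- a ≥ M + 3
    have haM : M + 3 ≤ a := by omega
    -- Z inside window [a, a + W - 1]
    have hwin : Z ⊆ Finset.Icc a (a + W - 1) := by
      intro w hw
      have h1 := Z.min'_le w hw
      have h2 := Z.le_max' w hw
      rw [Finset.mem_Icc]
      omega
    -- split
    set D1 := Finset.Icc a (M+r) with hD1
    set D2 := Finset.Icc (M+W+2) (M+W+r) ∩ Finset.Icc a (a+W-1) with hD2
    have hsplit : Z ⊆ D1 ∪ D2 := by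
      intro w hw
      have h1 := Finset.mem_Icc.mp (hwin hw)
      rcases Finset.mem_union.mp (hZX hw) with h | h
      · rw [hBlk, Finset.mem_Icc] at h
        exact Finset.mem_union_left _ (Finset.mem_Icc.mpr (by omega))
      · rw [hCl, Finset.mem_Icc] at h
        refine Finset.mem_union_right _ (Finset.mem_inter.mpr
          ⟨Finset.mem_Icc.mpr (by omega), Finset.mem_Icc.mpr (by omega)⟩)
    have hcount := Finset.card_le_card hsplit
    have hcu := Finset.card_union_le D1 D2
    have hc1 : D1.card = M + r + 1 - a := by rw [hD1, Nat.card_Icc]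
    have hc2a : D2.card ≤ r - 1 := by
      have h9 : D2 ⊆ Finset.Icc (M+W+2) (M+W+r) := hD2 ▸ Finset.inter_subset_left
      have := Finset.card_le_card h9
      rw [Nat.card_Icc] at this
      omega
    have hc2b : D2.card ≤ (a+W-1) + 1 - (M+W+2) := by
      have h9 : D2 ⊆ Finset.Icc (M+W+2) (a+W-1) := by
        intro w hw
        rw [hD2, Finset.mem_inter, Finset.mem_Icc, Finset.mem_Icc] at hw
        rw [Finset.mem_Icc]
        omega
      have := Finset.card_le_card h9
      rwa [Nat.card_Icc] at this
    omega
  have hZeq : Z = Blk := Finset.eq_of_subset_of_card_le hZBlk (by omega)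
  rwa [hZeq] at hZd

/-- Step 5: the window [nn-r+1, nn] is forced to be zero-sum mod r -/
lemma force_right (hr : 3 ≤ r) (hW : r - 1 ≤ W)
    (hgeo : M + W + r ≤ nn) (hgeo2 : M + 2*r ≤ nn + 1)
    (hnoWide : ∀ Z : Finset ℕ, Z ⊆ Finset.Icc (M+1) nn → Z.card = r →
      (r:ℤ) ∣ ∑ x ∈ Z, Δ x → W ≤ diam Z → False) :
    (r:ℤ) ∣ ∑ x ∈ Finset.Icc (nn-r+1) nn, Δ x := by
  classical
  set Cl := Finset.Icc (M+1) (M+r-1) with hCl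
  set Blk := Finset.Icc (nn-r+1) nn with hBlk
  have hdisj : Disjoint Cl Blk := by
    rw [Finset.disjoint_left]
    intro z hz hz'
    rw [hBlk, Finset.mem_Icc] at hz'
    rw [hCl, Finset.mem_Icc] at hz
    omega
  have hcardB : Blk.card = r := by rw [hBlk, Nat.card_Icc]; omega
  have hcardC : Cl.card = r - 1 := by rw [hCl, Nat.card_Icc]; omega
  have hcardX : (Cl ∪ Blk).card = 2*r - 1 := by
    rw [Finset.card_union_of_disjoint hdisj, hcardC, hcardB]; omega
  obtain ⟨Z, hZX, hZc, hZd⟩ := egz r (Cl ∪ Blk) Δ (by omega)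
  have hZne : Z.Nonempty := Finset.card_pos.mp (by omega)
  have hZIcc : Z ⊆ Finset.Icc (M+1) nn := by
    intro z hz
    rcases Finset.mem_union.mp (hZX hz) with h | h
    · rw [hCl, Finset.mem_Icc] at h; rw [Finset.mem_Icc]; omega
    · rw [hBlk, Finset.mem_Icc] at h; rw [Finset.mem_Icc]; omega
  have hdZ : diam Z < W := by
    by_contra hcon
    exact hnoWide Z hZIcc hZc hZd (by omega)
  have hZBlk : Z ⊆ Blk := by
    by_contra hcon
    obtain ⟨z, hzZ, hzB⟩ := Finset.not_subset.mp hcon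
    have hzC : z ∈ Cl := by
      rcases Finset.mem_union.mp (hZX hzZ) with h | h
      · exact h
      · exact absurd h hzB
    rw [hCl, Finset.mem_Icc] at hzC
    set a := Z.min' hZne with ha
    have hdiam : diam Z = Z.max' hZne - a := diam_eq Z hZne
    have hminle : a ≤ z := Z.min'_le z hzZ
    have hamem : Z.min' hZne ∈ Z := Z.min'_mem hZne
    have hage : M+1 ≤ a ∧ a ≤ nn := by
      have := Finset.mem_Icc.mp (hZIcc hamem)
      exact this
    have hwin : Z ⊆ Finset.Icc a (a + W - 1) := by
      intro w hw
      have h1 := Z.min'_le w hw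
      have h2 := Z.le_max' w hw
      rw [Finset.mem_Icc]
      omega
    set D1 := Finset.Icc a (M+r-1) with hD1
    set D2 := Finset.Icc (nn-r+1) nn ∩ Finset.Icc a (a+W-1) with hD2
    have hsplit : Z ⊆ D1 ∪ D2 := by
      intro w hw
      have h1 := Finset.mem_Icc.mp (hwin hw)
      rcases Finset.mem_union.mp (hZX hw) with h | h
      · rw [hCl, Finset.mem_Icc] at h
        exact Finset.mem_union_left _ (Finset.mem_Icc.mpr (by omega))
      · rw [hBlk, Finset.mem_Icc] at h
        refine Finset.mem_union_right _ (Finset.mem_inter.mpr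
          ⟨Finset.mem_Icc.mpr (by omega), Finset.mem_Icc.mpr (by omega)⟩)
    have hcount := Finset.card_le_card hsplit
    have hcu := Finset.card_union_le D1 D2
    have hc1 : D1.card = M + r - a := by rw [hD1, Nat.card_Icc]; omega
    have hc2a : D2.card ≤ r := by
      have h9 : D2 ⊆ Finset.Icc (nn-r+1) nn := hD2 ▸ Finset.inter_subset_left
      have := Finset.card_le_card h9
      rw [Nat.card_Icc] at this
      omega
    have hc2b : D2.card ≤ (a+W-1) + 1 - (nn-r+1) := by
      have h9 : D2 ⊆ Finset.Icc (nn-r+1) (a+W-1) := by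
        intro w hw
        rw [hD2, Finset.mem_inter, Finset.mem_Icc, Finset.mem_Icc] at hw
        rw [Finset.mem_Icc]
        omega
      have := Finset.card_le_card h9
      rwa [Nat.card_Icc] at this
    omega
  have hZeq : Z = Blk := Finset.eq_of_subset_of_card_le hZBlk (by omega)
  rwa [hZeq] at hZd

end force

section endgame
variable (r nn M : ℕ) (Δ : ℕ → ℤ)

/-- parity helper -/
lemma odd_dvd_of_dvd_two_mul {r : ℕ} (ho : Odd r) {w : ℤ} (h : (r:ℤ) ∣ 2*w) : (r:ℤ) ∣ w := by
  obtain ⟨c, hc⟩ := h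
  rcases Int.even_or_odd c with ⟨e, he⟩ | ⟨e, he⟩
  · refine ⟨e, ?_⟩
    have h2 : (2:ℤ) * w = 2 * ((r:ℤ) * e) := by rw [hc, he]; ring
    exact mul_left_cancel₀ two_ne_zero h2
  · exfalso
    have hE : Even ((2:ℤ)*w) := even_two_mul w
    rw [hc] at hE
    have hO : Odd ((r:ℤ) * c) := by
      refine Odd.mul ?_ ⟨e, by omega⟩
      obtain ⟨k, hk⟩ := ho
      exact ⟨k, by push_cast [hk]; ring⟩
    exact (Int.not_odd_iff_even.mpr hE) hO

lemma half_parity {m : ℕ} (hm : 0 < m) {w : ℤ} (hdvd : ((2*m : ℕ):ℤ) ∣ (m:ℤ)*w) : (2:ℤ) ∣ w := by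
  obtain ⟨e, he⟩ := hdvd
  refine ⟨e, ?_⟩
  have h2 : (m:ℤ) * w = (m:ℤ) * (2 * e) := by push_cast at he ⊢; linarith
  exact mul_left_cancel₀ (by exact_mod_cast hm.ne') h2

lemma endgame (hr : 3 ≤ r) (hrnn : 3*r ≤ nn) (hMnn : M + 2*r ≤ nn + 1)
    (htorF : ∀ x ∈ Finset.Icc (M+1) (M+r), ∀ x' ∈ Finset.Icc (M+1) (M+r),
      (r:ℤ) ∣ 2*(Δ x - Δ x'))
    (htorB : ∀ y ∈ Finset.Icc (nn-r+1) nn, ∀ y' ∈ Finset.Icc (nn-r+1) nn,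
      (r:ℤ) ∣ 2*(Δ y - Δ y'))
    (hG2 : ∀ U V : Finset ℕ, U ⊆ Finset.Icc (M+1) (M+r) → V ⊆ Finset.Icc (nn-r+1) (nn-1) →
      U.card = V.card → U.Nonempty → ¬ (r:ℤ) ∣ (∑ x ∈ V, Δ x - ∑ x ∈ U, Δ x))
    (p : ℕ) (hp : p ∈ Finset.Icc (M+1) (M+r)) (q : ℕ) (hq : q ∈ Finset.Icc (M+1) (M+r))
    (hpq : ¬ (r:ℤ) ∣ (Δ p - Δ q)) : False := by
  classical
  set blk := Finset.Icc (M+1) (M+r) with hblk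
  set B' := Finset.Icc (nn-r+1) (nn-1) with hB'
  set y₀ := nn - r + 1 with hy₀
  have hy₀B : y₀ ∈ Finset.Icc (nn-r+1) nn := by rw [Finset.mem_Icc]; omega
  -- r is even
  have hreven : ∃ m, r = 2*m ∧ 2 ≤ m := by
    rcases Nat.even_or_odd r with ⟨m, hm⟩ | ho
    · exact ⟨m, by omega, by omega⟩
    · exact absurd (odd_dvd_of_dvd_two_mul ho (htorF p hp q hq)) hpq
  obtain ⟨m, hrm, hm2⟩ := hreven
  have hmne : ((m:ℤ)) ≠ 0 := by exact_mod_cast (by omega : m ≠ 0)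
  -- divisibility by m on blk and B₀
  have hmF : ∀ x ∈ blk, (m:ℤ) ∣ (Δ x - Δ q) := by
    intro x hx
    obtain ⟨c, hc⟩ := htorF x hx q hq
    refine ⟨c, ?_⟩
    have h2 : (2:ℤ) * (Δ x - Δ q) = 2 * ((m:ℤ) * c) := by
      rw [hc]; push_cast [hrm]; ring
    exact mul_left_cancel₀ two_ne_zero h2
  have hmB : ∀ y ∈ Finset.Icc (nn-r+1) nn, (m:ℤ) ∣ (Δ y - Δ y₀) := by
    intro y hy
    obtain ⟨c, hc⟩ := htorB y hy y₀ hy₀B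
    refine ⟨c, ?_⟩
    have h2 : (2:ℤ) * (Δ y - Δ y₀) = 2 * ((m:ℤ) * c) := by
      rw [hc]; push_cast [hrm]; ring
    exact mul_left_cancel₀ two_ne_zero h2
  -- quotients
  set cF : ℕ → ℤ := fun x => (Δ x - Δ q) / m with hcF
  set cB : ℕ → ℤ := fun y => (Δ y - Δ y₀) / m with hcB
  have hcFm : ∀ x ∈ blk, (m:ℤ) * cF x = Δ x - Δ q := fun x hx => Int.mul_ediv_cancel' (hmF x hx)
  have hcBm : ∀ y ∈ Finset.Icc (nn-r+1) nn, (m:ℤ) * cB y = Δ y - Δ y₀ :=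
    fun y hy => Int.mul_ediv_cancel' (hmB y hy)
  -- classes
  set Fa := blk.filter (fun x => (r:ℤ) ∣ (Δ x - Δ q)) with hFa
  set Fb := blk.filter (fun x => ¬ (r:ℤ) ∣ (Δ x - Δ q)) with hFb
  set Ba := B'.filter (fun y => (r:ℤ) ∣ (Δ y - Δ y₀)) with hBa
  set Bb := B'.filter (fun y => ¬ (r:ℤ) ∣ (Δ y - Δ y₀)) with hBb
  set α := Fa.card with hα
  set β := Fb.card with hβ
  set γ := Ba.card with hγ
  set δ := Bb.card with hδ
  have hcardblk : blk.card = r := by rw [hblk, Nat.card_Icc]; omega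
  have hcardB' : B'.card = r - 1 := by rw [hB', Nat.card_Icc]; omega
  have hαβ : α + β = r := by
    rw [hα, hβ, hFa, hFb, Finset.card_filter_add_card_filter_not, hcardblk]
  have hγδ : γ + δ = r - 1 := by
    rw [hγ, hδ, hBa, hBb, Finset.card_filter_add_card_filter_not, hcardB']
  have hα1 : 1 ≤ α := Finset.card_pos.mpr ⟨q, by
    rw [hFa, Finset.mem_filter]; exact ⟨hq, by simp⟩⟩
  have hβ1 : 1 ≤ β := Finset.card_pos.mpr ⟨p, by
    rw [hFb, Finset.mem_filter]; exact ⟨hp, hpq⟩⟩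
  -- parity of quotients
  have hparFa : ∀ x ∈ Fa, (2:ℤ) ∣ cF x := by
    intro x hx
    rw [hFa, Finset.mem_filter] at hx
    apply half_parity (by omega : 0 < m)
    rw [hcFm x hx.1]
    exact (by rw [← hrm]; exact hx.2)
  have hparFb : ∀ x ∈ Fb, (2:ℤ) ∣ (cF x - 1) := by
    intro x hx
    rw [hFb, Finset.mem_filter] at hx
    rcases Int.even_or_odd (cF x) with ⟨e, he⟩ | ⟨e, he⟩
    · exfalso
      apply hx.2
      have : Δ x - Δ q = (r:ℤ) * e := by
        rw [← hcFm x hx.1, he]; push_cast [hrm]; ring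
      exact ⟨e, this⟩
    · exact ⟨e, by omega⟩
  have hB'B : B' ⊆ Finset.Icc (nn-r+1) nn := by
    intro y hy; rw [hB', Finset.mem_Icc] at hy; rw [Finset.mem_Icc]; omega
  have hparBa : ∀ y ∈ Ba, (2:ℤ) ∣ cB y := by
    intro y hy
    rw [hBa, Finset.mem_filter] at hy
    apply half_parity (by omega : 0 < m)
    rw [hcBm y (hB'B hy.1)]
    exact (by rw [← hrm]; exact hy.2)
  have hparBb : ∀ y ∈ Bb, (2:ℤ) ∣ (cB y - 1) := by
    intro y hy
    rw [hBb, Finset.mem_filter] at hy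
    rcases Int.even_or_odd (cB y) with ⟨e, he⟩ | ⟨e, he⟩
    · exfalso
      apply hy.2
      have : Δ y - Δ y₀ = (r:ℤ) * e := by
        rw [← hcBm y (hB'B hy.1), he]; push_cast [hrm]; ring
      exact ⟨e, this⟩
    · exact ⟨e, by omega⟩
  -- choice of k and ε
  set t := Δ y₀ - Δ q with ht
  have hkey : ∃ k : ℕ, 1 ≤ k ∧ k ≤ r-1 ∧ ∃ ε : ℕ, ε ≤ 1 ∧ (r:ℤ) ∣ ((k:ℤ) * t - (ε:ℤ) * m) := by
    set g' := Int.gcd t (r:ℤ) with hg'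
    rcases le_or_gt 2 g' with hg2 | hg1
    · -- g' ≥ 2 : k = r / g', ε = 0
      have hgr : g' ∣ r := by
        have := Int.gcd_dvd_right (a := t) (b := (r:ℤ))
        exact_mod_cast this
      obtain ⟨τ, hτ⟩ := Int.gcd_dvd_left (a := t) (b := (r:ℤ))
      have hg'le : g' ≤ r := Nat.le_of_dvd (by omega) hgr
      have hkpos : 0 < r / g' := Nat.div_pos hg'le (by omega)
      have hkle : r / g' ≤ r / 2 := Nat.div_le_div_left hg2 (by omega)
      have hq1 : r / g' * g' = r := Nat.div_mul_cancel hgr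
      refine ⟨r / g', by omega, by omega, 0, by omega, ?_⟩
      have hcast : ((r / g' : ℕ):ℤ) * (g' : ℤ) = (r:ℤ) := by exact_mod_cast congrArg Nat.cast hq1
      refine ⟨τ, ?_⟩
      rw [hτ]
      simp only [Nat.cast_zero, zero_mul, sub_zero]
      linear_combination τ * hcast
    · -- g' ≤ 1 : coprime case
      have hg1' : g' = 1 := by
        have : g' ≠ 0 := by
          intro h0
          rw [hg'] at h0
          have := Int.gcd_eq_zero_iff.mp h0
          have hrz : (r:ℤ) = 0 := this.2
          exact_mod_cast absurd hrz (by exact_mod_cast (by omega : r ≠ 0))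
        omega
      have hcop : IsCoprime t (r:ℤ) := Int.isCoprime_iff_gcd_eq_one.mpr hg1'
      obtain ⟨u, v, huv⟩ := hcop
      set K : ℤ := (u * m) % (r:ℤ) with hK
      have hrpos : (0:ℤ) < r := by exact_mod_cast (by omega : 0 < r)
      have hK0 : 0 ≤ K := Int.emod_nonneg _ (by omega)
      have hKr : K < r := Int.emod_lt_of_pos _ hrpos
      have hKne : K ≠ 0 := by
        intro h0
        have hdvd : (r:ℤ) ∣ u * m := Int.dvd_of_emod_eq_zero h0
        have : (r:ℤ) ∣ m := by
          have h9 : (m:ℤ) = (u*m)*t + v*(m:ℤ)*r := by linear_combination (-(m:ℤ)) * huv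
          rw [h9]
          exact dvd_add (Dvd.dvd.mul_right hdvd t) ⟨v*m, by ring⟩
        have : (r:ℕ) ∣ m := by exact_mod_cast this
        have := Nat.le_of_dvd (by omega) this
        omega
      refine ⟨K.toNat, by omega, by omega, 1, le_refl 1, ?_⟩
      have hKt : (K.toNat : ℤ) = K := Int.toNat_of_nonneg hK0
      rw [hKt]
      have hKdef : K = u * m - r * ((u*m) / r) := by rw [hK, Int.emod_def]
      refine ⟨- ((m:ℤ)*v + ((u*m)/r)*t), ?_⟩
      rw [hKdef]
      linear_combination (m:ℤ) * huv
  obtain ⟨k, hk1, hkr, ε, hε, hkdvd⟩ := hkey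
  -- choose jB and jF
  set jB := k - γ with hjB
  set lo := k - α with hlo
  set jF := if (lo + jB + ε) % 2 = 0 then lo else lo + 1 with hjF
  have hjFpar : (jF + jB + ε) % 2 = 0 := by
    rw [hjF]; split_ifs with h
    · exact h
    · omega
  have hjFk : jF ≤ k := by rw [hjF]; split_ifs <;> omega
  have hjFβ : jF ≤ β := by rw [hjF]; split_ifs <;> omega
  have hjFα : k - jF ≤ α := by rw [hjF]; split_ifs <;> omega
  have hjBδ : jB ≤ δ := by omega
  have hjBγ : k - jB ≤ γ := by omega
  -- subsets with prescribed cardinalities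
  obtain ⟨U₁, hU₁, hU₁c⟩ := Finset.exists_subset_card_eq (s := Fb) (n := jF) (by omega)
  obtain ⟨U₂, hU₂, hU₂c⟩ := Finset.exists_subset_card_eq (s := Fa) (n := (k - jF)) (by omega)
  obtain ⟨V₁, hV₁, hV₁c⟩ := Finset.exists_subset_card_eq (s := Bb) (n := jB) (by omega)
  obtain ⟨V₂, hV₂, hV₂c⟩ := Finset.exists_subset_card_eq (s := Ba) (n := (k - jB)) (by omega)
  have hdFab : Disjoint Fb Fa := by
    rw [hFb, hFa]
    exact (Finset.disjoint_filter_filter_not blk blk _).symm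
  have hdBab : Disjoint Bb Ba := by
    rw [hBb, hBa]
    exact (Finset.disjoint_filter_filter_not B' B' _).symm
  have hdU : Disjoint U₁ U₂ := hdFab.mono hU₁ hU₂
  have hdV : Disjoint V₁ V₂ := hdBab.mono hV₁ hV₂
  set U := U₁ ∪ U₂ with hU
  set V := V₁ ∪ V₂ with hV
  have hUcard : U.card = k := by
    rw [hU, Finset.card_union_of_disjoint hdU, hU₁c, hU₂c]; omega
  have hVcard : V.card = k := by
    rw [hV, Finset.card_union_of_disjoint hdV, hV₁c, hV₂c]; omega
  have hUblk : U ⊆ blk := by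
    rw [hU]
    apply Finset.union_subset
    · exact hU₁.trans (by rw [hFb]; exact Finset.filter_subset _ _)
    · exact hU₂.trans (by rw [hFa]; exact Finset.filter_subset _ _)
  have hVB' : V ⊆ B' := by
    rw [hV]
    apply Finset.union_subset
    · exact hV₁.trans (by rw [hBb]; exact Finset.filter_subset _ _)
    · exact hV₂.trans (by rw [hBa]; exact Finset.filter_subset _ _)
  have hcast2 : ((r:ℕ):ℤ) = 2*(m:ℤ) := by exact_mod_cast congrArg Nat.cast hrm
  -- sum of U
  have hUsum : (r:ℤ) ∣ (∑ x ∈ U, Δ x - (k:ℤ) * Δ q - (jF:ℤ) * (m:ℤ)) := by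
    have h1 : ∑ x ∈ U, Δ x - (k:ℤ) * Δ q = (m:ℤ) * ∑ x ∈ U, cF x := by
      rw [Finset.mul_sum]
      have hcong : ∀ x ∈ U, (m:ℤ) * cF x = Δ x - Δ q := fun x hx => hcFm x (hUblk hx)
      rw [Finset.sum_congr rfl hcong, Finset.sum_sub_distrib, Finset.sum_const, hUcard]
      push_cast; ring
    have h2 : (2:ℤ) ∣ (∑ x ∈ U, cF x - (jF:ℤ)) := by
      rw [hU, Finset.sum_union hdU]
      have e1 : (2:ℤ) ∣ (∑ x ∈ U₁, cF x - (jF:ℤ)) := by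
        have hrw : ∑ x ∈ U₁, (cF x - 1) = ∑ x ∈ U₁, cF x - (jF:ℤ) := by
          rw [Finset.sum_sub_distrib, Finset.sum_const, hU₁c]; push_cast; ring
        rw [← hrw]
        exact Finset.dvd_sum (fun x hx => hparFb x (hU₁ hx))
      have e2 : (2:ℤ) ∣ ∑ x ∈ U₂, cF x := Finset.dvd_sum (fun x hx => hparFa x (hU₂ hx))
      obtain ⟨a1, ha1⟩ := e1
      obtain ⟨a2, ha2⟩ := e2
      exact ⟨a1 + a2, by linarith⟩
    obtain ⟨E, hE⟩ := h2
    refine ⟨E, ?_⟩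
    linear_combination h1 + (m:ℤ)*hE - E*hcast2
  -- sum of V
  have hVsum : (r:ℤ) ∣ (∑ y ∈ V, Δ y - (k:ℤ) * Δ y₀ - (jB:ℤ) * (m:ℤ)) := by
    have h1 : ∑ y ∈ V, Δ y - (k:ℤ) * Δ y₀ = (m:ℤ) * ∑ y ∈ V, cB y := by
      rw [Finset.mul_sum]
      have hcong : ∀ y ∈ V, (m:ℤ) * cB y = Δ y - Δ y₀ :=
        fun y hy => hcBm y (hB'B (hVB' hy))
      rw [Finset.sum_congr rfl hcong, Finset.sum_sub_distrib, Finset.sum_const, hVcard]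
      push_cast; ring
    have h2 : (2:ℤ) ∣ (∑ y ∈ V, cB y - (jB:ℤ)) := by
      rw [hV, Finset.sum_union hdV]
      have e1 : (2:ℤ) ∣ (∑ y ∈ V₁, cB y - (jB:ℤ)) := by
        have hrw : ∑ y ∈ V₁, (cB y - 1) = ∑ y ∈ V₁, cB y - (jB:ℤ) := by
          rw [Finset.sum_sub_distrib, Finset.sum_const, hV₁c]; push_cast; ring
        rw [← hrw]
        exact Finset.dvd_sum (fun y hy => hparBb y (hV₁ hy))
      have e2 : (2:ℤ) ∣ ∑ y ∈ V₂, cB y := Finset.dvd_sum (fun y hy => hparBa y (hV₂ hy))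
      obtain ⟨a1, ha1⟩ := e1
      obtain ⟨a2, ha2⟩ := e2
      exact ⟨a1 + a2, by linarith⟩
    obtain ⟨E, hE⟩ := h2
    refine ⟨E, ?_⟩
    linear_combination h1 + (m:ℤ)*hE - E*hcast2
  -- parity of ε + jB - jF
  have hpar2 : (2:ℤ) ∣ ((ε:ℤ) + (jB:ℤ) - (jF:ℤ)) := by
    have hn : 2 ∣ (jF + jB + ε) := Nat.dvd_of_mod_eq_zero hjFpar
    have h2 : (2:ℤ) ∣ ((jF:ℤ) + (jB:ℤ) + (ε:ℤ)) := by exact_mod_cast hn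
    obtain ⟨w, hw⟩ := h2
    exact ⟨w - (jF:ℤ), by linarith⟩
  -- final divisibility kills hG2
  have hfinal : (r:ℤ) ∣ (∑ x ∈ V, Δ x - ∑ x ∈ U, Δ x) := by
    obtain ⟨e1, he1⟩ := hUsum
    obtain ⟨e2, he2⟩ := hVsum
    obtain ⟨e3, he3⟩ := hkdvd
    obtain ⟨e4, he4⟩ := hpar2
    refine ⟨e2 - e1 + e3 + e4, ?_⟩
    linear_combination he2 - he1 + he3 + (m:ℤ)*he4 - e4*hcast2 - (k:ℤ)*ht
  have hUne : U.Nonempty := Finset.card_pos.mp (by omega)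
  exact hG2 U V hUblk hVB' (hUcard.trans hVcard.symm) hUne hfinal

end endgame

lemma upper (s r : ℕ) (hs : 3 ≤ s) (hsr : s ≤ r) (hr : r ≤ 2*s-2)
    (hg : 1 < Nat.gcd r s) (hr2 : s + s / Nat.gcd r s - 1 ≤ r) (Δ : ℕ → ℤ) :
    ∃ S₁ S₂ : Finset ℕ, S₁ ⊆ Finset.Icc 1 (4*s+r-3) ∧ S₂ ⊆ Finset.Icc 1 (4*s+r-3) ∧
    ((s:ℤ) ∣ ∑ x ∈ S₁, Δ x) ∧ ((r:ℤ) ∣ ∑ x ∈ S₂, Δ x) ∧ S₁.card = s ∧ S₂.card = r ∧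
    (∀ a ∈ S₁, ∀ b ∈ S₂, a < b) ∧ diam S₁ ≤ diam S₂ := by
  classical
  have hr3 : 3 ≤ r := le_trans hs hsr
  by_contra hno
  set nn := 4*s+r-3 with hnn
  have hnn3 : nn + 3 = 4*s + r := by omega
  have key : ∀ S₁ S₂ : Finset ℕ, S₁ ⊆ Finset.Icc 1 nn → S₂ ⊆ Finset.Icc 1 nn →
      ((s:ℤ) ∣ ∑ x ∈ S₁, Δ x) → ((r:ℤ) ∣ ∑ x ∈ S₂, Δ x) → S₁.card = s → S₂.card = r →
      (∀ a ∈ S₁, ∀ b ∈ S₂, a < b) → diam S₁ ≤ diam S₂ → False := by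
    intro S₁ S₂ h1 h2 h3 h4 h5 h6 h7 h8
    exact hno ⟨S₁, S₂, h1, h2, h3, h4, h5, h6, h7, h8⟩
  -- step 1 : EGZ on [1, 2s-1]
  obtain ⟨S₀, hS₀sub, hS₀card, hS₀dvd⟩ := egz s (Finset.Icc 1 (2*s-1)) Δ
    (by rw [Nat.card_Icc]; omega)
  have hS₀ne : S₀.Nonempty := Finset.card_pos.mp (by omega)
  set M := S₀.max' hS₀ne with hM
  set W := diam S₀ with hW
  have hbd := bounds_of_subset_Icc hS₀ne hS₀sub
  have hMle : M ≤ 2*s-1 := hbd.2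
  have hWle : W ≤ 2*s-2 := by
    have := diam_le_of_subset_Icc hS₀ne hS₀sub
    omega
  have hS₀Icc : S₀ ⊆ Finset.Icc 1 nn := hS₀sub.trans (Finset.Icc_subset_Icc le_rfl (by omega))
  -- step 2
  have hnoWide : ∀ Z : Finset ℕ, Z ⊆ Finset.Icc (M+1) nn → Z.card = r →
      ((r:ℤ) ∣ ∑ x ∈ Z, Δ x) → W ≤ diam Z → False := by
    intro Z hZ hZc hZd hZW
    apply key S₀ Z hS₀Icc (hZ.trans (Finset.Icc_subset_Icc (by omega) le_rfl))
      hS₀dvd hZd hS₀card hZc ?_ hZW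
    intro a ha b hb
    have h1 : a ≤ M := S₀.le_max' a ha
    have h2 := Finset.mem_Icc.mp (hZ hb)
    omega
  -- step 3 : W ≥ r - 1
  have hWr : r - 1 ≤ W := by
    by_contra hcon
    push_neg at hcon
    obtain ⟨Z, hZsub, hZc, hZd⟩ := egz r (Finset.Icc (M+1) (M+2*r-1)) Δ
      (by rw [Nat.card_Icc]; omega)
    have hZne : Z.Nonempty := Finset.card_pos.mp (by omega)
    have hdZ := card_le_diam hZne
    exact hnoWide Z (hZsub.trans (Finset.Icc_subset_Icc le_rfl (by omega))) hZc hZd (by omega)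
  -- steps 4,5
  have hF₀ : (r:ℤ) ∣ ∑ x ∈ Finset.Icc (M+1) (M+r), Δ x :=
    force_left Δ hr3 hWr (by omega) hnoWide
  have hB₀ : (r:ℤ) ∣ ∑ x ∈ Finset.Icc (nn-r+1) nn, Δ x :=
    force_right Δ hr3 hWr (by omega) (by omega) hnoWide
  -- step 6 : no s-zero-sum inside the block
  have hnozs : ∀ T : Finset ℕ, T ⊆ Finset.Icc (M+1) (M+r) → T.card = s →
      ((s:ℤ) ∣ ∑ x ∈ T, Δ x) → False := by
    intro T hT hTc hTd
    have hTne : T.Nonempty := Finset.card_pos.mp (by omega)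
    apply key T (Finset.Icc (nn-r+1) nn)
      (hT.trans (Finset.Icc_subset_Icc (by omega) (by omega)))
      (Finset.Icc_subset_Icc (by omega) le_rfl) hTd hB₀ hTc
      (by rw [Nat.card_Icc]; omega) ?_ ?_
    · intro a ha b hb
      have h1 := Finset.mem_Icc.mp (hT ha)
      have h2 := Finset.mem_Icc.mp hb
      omega
    · have h1 : diam T ≤ r - 1 := by
        have := diam_le_of_subset_Icc hTne hT
        omega
      have h2 : diam (Finset.Icc (nn-r+1) nn) = r - 1 := by
        rw [diam_Icc (by omega)]; omega
      omega
  -- step 7 : G1 and G2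
  have hG1 : ∀ U V : Finset ℕ, U ⊆ Finset.Icc (M+2) (M+r) → V ⊆ Finset.Icc (nn-r+1) nn →
      U.card = V.card → U.Nonempty → ¬ (r:ℤ) ∣ (∑ x ∈ V, Δ x - ∑ x ∈ U, Δ x) := by
    intro U V hU hV hUV hUne hdvd
    have hUblk : U ⊆ Finset.Icc (M+1) (M+r) := hU.trans (Finset.Icc_subset_Icc (by omega) le_rfl)
    have hdisj2 : Disjoint (Finset.Icc (M+1) (M+r) \ U) V := by
      rw [Finset.disjoint_left]
      intro z hz hz'
      have h1 := Finset.mem_Icc.mp (Finset.mem_sdiff.mp hz).1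
      have h2 := Finset.mem_Icc.mp (hV hz')
      omega
    set S₂ := (Finset.Icc (M+1) (M+r) \ U) ∪ V with hS₂
    have hk1 : 1 ≤ U.card := Finset.card_pos.mpr hUne
    have hkr : U.card ≤ r := by
      have := Finset.card_le_card hUblk
      rw [Nat.card_Icc] at this
      omega
    have hS₂card : S₂.card = r := by
      rw [hS₂, Finset.card_union_of_disjoint hdisj2, Finset.card_sdiff_of_subset hUblk, Nat.card_Icc]
      omega
    have hsumsd : ∑ x ∈ Finset.Icc (M+1) (M+r) \ U, Δ x + ∑ x ∈ U, Δ x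
        = ∑ x ∈ Finset.Icc (M+1) (M+r), Δ x := Finset.sum_sdiff hUblk
    have hS₂sum : ∑ x ∈ S₂, Δ x = ∑ x ∈ Finset.Icc (M+1) (M+r), Δ x
        + (∑ x ∈ V, Δ x - ∑ x ∈ U, Δ x) := by
      rw [hS₂, Finset.sum_union hdisj2]
      linarith
    have hS₂dvd : (r:ℤ) ∣ ∑ x ∈ S₂, Δ x := by
      rw [hS₂sum]; exact dvd_add hF₀ hdvd
    have hmem1 : M+1 ∈ S₂ := by
      rw [hS₂]
      apply Finset.mem_union_left
      rw [Finset.mem_sdiff]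
      constructor
      · rw [Finset.mem_Icc]; omega
      · intro hmem
        have := Finset.mem_Icc.mp (hU hmem)
        omega
    obtain ⟨v, hvV⟩ := Finset.card_pos.mp (show 0 < V.card by omega)
    have hmem2 : v ∈ S₂ := by rw [hS₂]; exact Finset.mem_union_right _ hvV
    have hvge := Finset.mem_Icc.mp (hV hvV)
    have hdiam : W ≤ diam S₂ := by
      have := diam_ge_of_mem hmem1 hmem2
      omega
    apply hnoWide S₂ ?_ hS₂card hS₂dvd hdiam
    rw [hS₂]
    apply Finset.union_subset
    · intro z hz
      have := Finset.mem_Icc.mp (Finset.mem_sdiff.mp hz).1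
      rw [Finset.mem_Icc]; omega
    · intro z hz
      have := Finset.mem_Icc.mp (hV hz)
      rw [Finset.mem_Icc]; omega
  have hG2 : ∀ U V : Finset ℕ, U ⊆ Finset.Icc (M+1) (M+r) → V ⊆ Finset.Icc (nn-r+1) (nn-1) →
      U.card = V.card → U.Nonempty → ¬ (r:ℤ) ∣ (∑ x ∈ V, Δ x - ∑ x ∈ U, Δ x) := by
    intro U V hU hV hUV hUne hdvd
    have hVB : V ⊆ Finset.Icc (nn-r+1) nn := hV.trans (Finset.Icc_subset_Icc le_rfl (by omega))
    have hdisj2 : Disjoint (Finset.Icc (nn-r+1) nn \ V) U := by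
      rw [Finset.disjoint_left]
      intro z hz hz'
      have h1 := Finset.mem_Icc.mp (Finset.mem_sdiff.mp hz).1
      have h2 := Finset.mem_Icc.mp (hU hz')
      omega
    set S₂ := (Finset.Icc (nn-r+1) nn \ V) ∪ U with hS₂
    have hk1 : 1 ≤ U.card := Finset.card_pos.mpr hUne
    have hkr : V.card ≤ r - 1 := by
      have := Finset.card_le_card hV
      rw [Nat.card_Icc] at this
      omega
    have hS₂card : S₂.card = r := by
      rw [hS₂, Finset.card_union_of_disjoint hdisj2, Finset.card_sdiff_of_subset hVB, Nat.card_Icc]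
      omega
    have hsumsd : ∑ x ∈ Finset.Icc (nn-r+1) nn \ V, Δ x + ∑ x ∈ V, Δ x
        = ∑ x ∈ Finset.Icc (nn-r+1) nn, Δ x := Finset.sum_sdiff hVB
    have hS₂sum : ∑ x ∈ S₂, Δ x = ∑ x ∈ Finset.Icc (nn-r+1) nn, Δ x
        - (∑ x ∈ V, Δ x - ∑ x ∈ U, Δ x) := by
      rw [hS₂, Finset.sum_union hdisj2]
      linarith
    have hS₂dvd : (r:ℤ) ∣ ∑ x ∈ S₂, Δ x := by
      rw [hS₂sum]; exact dvd_sub hB₀ hdvd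
    have hmemn : nn ∈ S₂ := by
      rw [hS₂]
      apply Finset.mem_union_left
      rw [Finset.mem_sdiff]
      constructor
      · rw [Finset.mem_Icc]; omega
      · intro hmem
        have := Finset.mem_Icc.mp (hV hmem)
        omega
    obtain ⟨u, huU⟩ := hUne
    have hmemu : u ∈ S₂ := by rw [hS₂]; exact Finset.mem_union_right _ huU
    have huge := Finset.mem_Icc.mp (hU huU)
    have hdiam : W ≤ diam S₂ := by
      have := diam_ge_of_mem hmemu hmemn
      omega
    apply hnoWide S₂ ?_ hS₂card hS₂dvd hdiam
    rw [hS₂]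
    apply Finset.union_subset
    · intro z hz
      have := Finset.mem_Icc.mp (Finset.mem_sdiff.mp hz).1
      rw [Finset.mem_Icc]; omega
    · intro z hz
      have := Finset.mem_Icc.mp (hU hz)
      rw [Finset.mem_Icc]; omega
  -- step 9 : two-torsion on the block
  have htorF : ∀ x ∈ Finset.Icc (M+1) (M+r), ∀ x' ∈ Finset.Icc (M+1) (M+r),
      (r:ℤ) ∣ 2*(Δ x - Δ x') := by
    intro x hx x' hx'
    by_cases hxx : x = x'
    · rw [hxx]; simp
    · have hblkcard : (Finset.Icc (M+1) (M+r)).card = r := by rw [Nat.card_Icc]; omega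
      have hnotsub : ¬ (Finset.Icc (M+1) (M+r)) ⊆ ({x, x'} : Finset ℕ) := by
        intro hsub
        have := Finset.card_le_card hsub
        have hle : ({x, x'} : Finset ℕ).card ≤ 2 := Finset.card_insert_le _ _ |>.trans (by simp)
        omega
      obtain ⟨z, hzblk, hznot⟩ := Finset.not_subset.mp hnotsub
      have hA : ((Finset.Icc (M+1) (M+r)).erase z).card = r - 1 := by
        rw [Finset.card_erase_of_mem hzblk, hblkcard]
      have hB : (Finset.Icc (nn-r+1) (nn-1)).card = r - 1 := by rw [Nat.card_Icc]; omega
      have hforbid : ∀ U V : Finset ℕ, U ⊆ (Finset.Icc (M+1) (M+r)).erase z →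
          V ⊆ Finset.Icc (nn-r+1) (nn-1) → U.card = V.card → U.Nonempty →
          ¬ (r:ℤ) ∣ (∑ x ∈ V, Δ x - ∑ x ∈ U, Δ x) := by
        intro U V hU hV hUV hUne
        exact hG2 U V (hU.trans (Finset.erase_subset _ _)) hV hUV hUne
      have hswap := pair_swap Δ hr3 hA hB hforbid x
        (Finset.mem_erase.mpr ⟨fun h => hznot (by rw [← h]; exact Finset.mem_insert_self _ _), hx⟩)
        x' (Finset.mem_erase.mpr ⟨fun h => hznot (by rw [← h]; simp), hx'⟩)
        (nn-r+1) (by rw [Finset.mem_Icc]; omega)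
        (nn-r+2) (by rw [Finset.mem_Icc]; omega)
        hxx (by omega)
      exact hswap.1
  -- step 10 : two-torsion on the tail
  have htorB : ∀ y ∈ Finset.Icc (nn-r+1) nn, ∀ y' ∈ Finset.Icc (nn-r+1) nn,
      (r:ℤ) ∣ 2*(Δ y - Δ y') := by
    intro y hy y' hy'
    by_cases hyy : y = y'
    · rw [hyy]; simp
    · have hBcard : (Finset.Icc (nn-r+1) nn).card = r := by rw [Nat.card_Icc]; omega
      have hnotsub : ¬ (Finset.Icc (nn-r+1) nn) ⊆ ({y, y'} : Finset ℕ) := by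
        intro hsub
        have := Finset.card_le_card hsub
        have hle : ({y, y'} : Finset ℕ).card ≤ 2 := Finset.card_insert_le _ _ |>.trans (by simp)
        omega
      obtain ⟨w, hwB, hwnot⟩ := Finset.not_subset.mp hnotsub
      have hA : (Finset.Icc (M+2) (M+r)).card = r - 1 := by rw [Nat.card_Icc]; omega
      have hB : ((Finset.Icc (nn-r+1) nn).erase w).card = r - 1 := by
        rw [Finset.card_erase_of_mem hwB, hBcard]
      have hforbid : ∀ U V : Finset ℕ, U ⊆ Finset.Icc (M+2) (M+r) →
          V ⊆ (Finset.Icc (nn-r+1) nn).erase w → U.card = V.card → U.Nonempty →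
          ¬ (r:ℤ) ∣ (∑ x ∈ V, Δ x - ∑ x ∈ U, Δ x) := by
        intro U V hU hV hUV hUne
        exact hG1 U V hU (hV.trans (Finset.erase_subset _ _)) hUV hUne
      have hswap := pair_swap Δ hr3 hA hB hforbid
        (M+2) (by rw [Finset.mem_Icc]; omega)
        (M+3) (by rw [Finset.mem_Icc]; omega)
        y (Finset.mem_erase.mpr ⟨fun h => hwnot (by rw [← h]; exact Finset.mem_insert_self _ _), hy⟩)
        y' (Finset.mem_erase.mpr ⟨fun h => hwnot (by rw [← h]; simp), hy'⟩)
        (by omega) hyy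
      exact hswap.2
  -- step 11 : final dichotomy
  by_cases hconst : ∀ x ∈ Finset.Icc (M+1) (M+r), ∀ x' ∈ Finset.Icc (M+1) (M+r),
      (r:ℤ) ∣ (Δ x - Δ x')
  · set d := Nat.gcd r s with hd
    have hds : d ∣ s := Nat.gcd_dvd_right r s
    have hdr : d ∣ r := Nat.gcd_dvd_left r s
    have hM1blk : M+1 ∈ Finset.Icc (M+1) (M+r) := by rw [Finset.mem_Icc]; omega
    obtain ⟨T, hTsub, hTc, hTd⟩ := class_lemma (by omega) hds (Finset.Icc (M+1) (M+r)) Δ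
      (Δ (M+1)) (by rw [Nat.card_Icc]; omega) (by omega)
      (fun x hx => dvd_trans (Int.natCast_dvd_natCast.mpr hdr) (hconst x hx (M+1) hM1blk))
    exact hnozs T hTsub hTc hTd
  · push_neg at hconst
    obtain ⟨p, hp, q, hq, hpq⟩ := hconst
    exact endgame r nn M Δ hr3 (by omega) (by omega) htorF htorB hG2 p hp q hq hpq

section lower
variable (s r : ℕ)

def Pones (s : ℕ) (x : ℕ) : Prop := (s ≤ x ∧ x ≤ 2*s-2) ∨ 4*s-2 ≤ x

instance : DecidablePred (Pones s) := fun x => by unfold Pones; infer_instance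

noncomputable def Δ₀ (s : ℕ) : ℕ → ℤ := fun x => if Pones s x then 1 else 0

lemma mono01 (m : ℕ) (hm : 0 < m) (T : Finset ℕ) (hTc : T.card = m)
    (hdvd : (m:ℤ) ∣ ∑ x ∈ T, Δ₀ s x) :
    (∀ x ∈ T, ¬ Pones s x) ∨ (∀ x ∈ T, Pones s x) := by
  classical
  have hsum : ∑ x ∈ T, Δ₀ s x = ((T.filter (Pones s)).card : ℤ) := by
    unfold Δ₀
    rw [Finset.sum_boole]
  rw [hsum] at hdvd
  have hdvd' : m ∣ (T.filter (Pones s)).card := by exact_mod_cast hdvd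
  have hle : (T.filter (Pones s)).card ≤ m := by
    have := Finset.card_le_card (Finset.filter_subset (Pones s) T)
    omega
  rcases Nat.eq_zero_or_pos (T.filter (Pones s)).card with h0 | hpos
  · left
    intro x hx hPx
    have : x ∈ T.filter (Pones s) := Finset.mem_filter.mpr ⟨hx, hPx⟩
    rw [Finset.card_eq_zero.mp h0] at this
    exact absurd this (Finset.notMem_empty x)
  · right
    have hem : (T.filter (Pones s)).card = m := by
      have := Nat.le_of_dvd hpos hdvd'
      omega
    have heq : T.filter (Pones s) = T :=
      Finset.eq_of_subset_of_card_le (Finset.filter_subset _ _) (by omega)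
    intro x hx
    have hx' : x ∈ T.filter (Pones s) := by rw [heq]; exact hx
    exact (Finset.mem_filter.mp hx').2

lemma lower_core (hs : 3 ≤ s) (hsr : s ≤ r) (hr : r ≤ 2*s-2) :
    ∀ S₁ S₂ : Finset ℕ, S₁ ⊆ Finset.Icc 1 (4*s+r-4) → S₂ ⊆ Finset.Icc 1 (4*s+r-4) →
    ((s:ℤ) ∣ ∑ x ∈ S₁, Δ₀ s x) → ((r:ℤ) ∣ ∑ x ∈ S₂, Δ₀ s x) →
    S₁.card = s → S₂.card = r → (∀ a ∈ S₁, ∀ b ∈ S₂, a < b) →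
    diam S₁ ≤ diam S₂ → False := by
  classical
  intro S₁ S₂ hS₁I hS₂I hd1 hd2 hc1 hc2 hord hdd
  have hS₁ne : S₁.Nonempty := Finset.card_pos.mp (by omega)
  have hS₂ne : S₂.Nonempty := Finset.card_pos.mp (by omega)
  have hN : ∀ x ∈ S₁, 1 ≤ x ∧ x ≤ 4*s+r-4 := fun x hx => Finset.mem_Icc.mp (hS₁I hx)
  have hN2 : ∀ x ∈ S₂, 1 ≤ x ∧ x ≤ 4*s+r-4 := fun x hx => Finset.mem_Icc.mp (hS₂I hx)
  rcases mono01 s r (by omega) S₂ hc2 hd2 with hz2 | ho2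
  · -- S₂ all zeros
    by_cases hylow : ∃ y ∈ S₂, y ≤ s-1
    · obtain ⟨y, hyS, hyle⟩ := hylow
      -- S₁ ⊆ [1, s-2]
      have hsub : S₁ ⊆ Finset.Icc 1 (s-2) := by
        intro a ha
        have h1 := hord a ha y hyS
        have h2 := (hN a ha).1
        rw [Finset.mem_Icc]; omega
      have := Finset.card_le_card hsub
      rw [Nat.card_Icc] at this
      omega
    · push_neg at hylow
      -- S₂ ⊆ [2s-1, 4s-3]
      have hS₂sub : ∀ y ∈ S₂, 2*s-1 ≤ y ∧ y ≤ 4*s-3 := by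
        intro y hy
        have h1 := hylow y hy
        have h2 := hz2 y hy
        unfold Pones at h2
        push_neg at h2
        have h3 := (hN2 y hy).1
        omega
      set mm := S₂.min' hS₂ne with hmm
      have hmmS : mm ∈ S₂ := S₂.min'_mem hS₂ne
      have hmmge : 2*s-1 ≤ mm := (hS₂sub mm hmmS).1
      have hdS₂ : diam S₂ ≤ 4*s-3 - mm := by
        rw [diam_eq S₂ hS₂ne]
        have := (hS₂sub _ (S₂.max'_mem hS₂ne)).2
        omega
      have hS₁lt : ∀ a ∈ S₁, a < mm := fun a ha => hord a ha mm hmmS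
      rcases mono01 s s (by omega) S₁ hc1 hd1 with hz1 | ho1
      · -- S₁ all zeros below mm
        set A₁ := S₁.filter (fun x => x ≤ s-1) with hA₁
        set k := A₁.card with hk
        have hA₂prop : ∀ x ∈ S₁, ¬ x ≤ s-1 → 2*s-1 ≤ x ∧ x ≤ mm - 1 := by
          intro x hx hxk
          have h1 := hz1 x hx
          unfold Pones at h1
          push_neg at h1
          have h2 := hS₁lt x hx
          have h3 := (hN x hx).1
          omega
        have hkle : k ≤ s - 1 := by
          have hsub : A₁ ⊆ Finset.Icc 1 (s-1) := by
            intro x hx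
            rw [hA₁, Finset.mem_filter] at hx
            have := (hN x hx.1).1
            rw [Finset.mem_Icc]; omega
          have := Finset.card_le_card hsub
          rw [Nat.card_Icc] at this
          omega
        rcases Nat.eq_zero_or_pos k with hk0 | hkpos
        · -- no small elements : S₁ ⊆ [2s-1, mm-1]
          have hsub : S₁ ⊆ Finset.Icc (2*s-1) (mm-1) := by
            intro x hx
            have hxk : ¬ x ≤ s-1 := by
              intro hle
              have : x ∈ A₁ := by rw [hA₁, Finset.mem_filter]; exact ⟨hx, hle⟩
              rw [Finset.card_eq_zero.mp hk0] at this
              exact absurd this (Finset.notMem_empty x)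
            have := hA₂prop x hx hxk
            rw [Finset.mem_Icc]; omega
          have hcard := Finset.card_le_card hsub
          rw [Nat.card_Icc] at hcard
          have hd1' := card_le_diam hS₁ne
          omega
        · -- k ≥ 1 : S₁ has diameter ≥ 2s-2 while max S₁ ≥ 3s-k-2
          have hA₁ne : A₁.Nonempty := Finset.card_pos.mp hkpos
          have hminA : A₁.min' hA₁ne ≤ s - k := by
            have hsub : A₁ ⊆ Finset.Icc (A₁.min' hA₁ne) (s-1) := by
              intro x hx
              have h1 := A₁.min'_le x hx
              rw [hA₁, Finset.mem_filter] at hx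
              rw [Finset.mem_Icc]; omega
            have := Finset.card_le_card hsub
            rw [Nat.card_Icc] at this
            omega
          have hminS₁ : S₁.min' hS₁ne ≤ s - k := by
            have h1 := S₁.min'_le _ (Finset.mem_of_mem_filter _ (A₁.min'_mem hA₁ne))
            omega
          -- A₂ = S₁ \ A₁
          set A₂ := S₁ \ A₁ with hA₂
          have hA₂card : A₂.card = s - k := by
            rw [hA₂, Finset.card_sdiff_of_subset (Finset.filter_subset _ _), ← hA₁]
            omega
          have hA₂ne : A₂.Nonempty := Finset.card_pos.mp (by omega)
          have hA₂mem : ∀ x ∈ A₂, 2*s-1 ≤ x ∧ x ≤ mm-1 := by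
            intro x hx
            rw [hA₂, Finset.mem_sdiff] at hx
            apply hA₂prop x hx.1
            intro hle
            exact hx.2 (by rw [hA₁, Finset.mem_filter]; exact ⟨hx.1, hle⟩)
          have hmaxA₂ : 3*s - k - 2 ≤ A₂.max' hA₂ne := by
            have hsub : A₂ ⊆ Finset.Icc (2*s-1) (A₂.max' hA₂ne) := by
              intro x hx
              have h1 := A₂.le_max' x hx
              have h2 := (hA₂mem x hx).1
              rw [Finset.mem_Icc]; omega
            have := Finset.card_le_card hsub
            rw [Nat.card_Icc] at this
            omega
          have hmaxS₁ : 3*s - k - 2 ≤ S₁.max' hS₁ne := by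
            have h1 := S₁.le_max' _ ((Finset.sdiff_subset) (A₂.max'_mem hA₂ne))
            omega
          have hmaxlt : S₁.max' hS₁ne < mm := hS₁lt _ (S₁.max'_mem hS₁ne)
          have hdS₁ : 2*s - 2 ≤ diam S₁ := by
            rw [diam_eq S₁ hS₁ne]
            omega
          omega
      · -- S₁ all ones below mm : impossible (only s-1 ones available)
        have hsub : S₁ ⊆ Finset.Icc s (2*s-2) := by
          intro x hx
          have h1 := ho1 x hx
          unfold Pones at h1
          have h2 := hS₁lt x hx
          have h3 := (hS₂sub mm hmmS).2
          rw [Finset.mem_Icc]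
          rcases h1 with h | h
          · omega
          · omega
        have := Finset.card_le_card hsub
        rw [Nat.card_Icc] at this
        omega
  · -- S₂ all ones
    by_cases hylow : ∃ y ∈ S₂, y ≤ 2*s-2
    · obtain ⟨y, hyS, hyle⟩ := hylow
      have hS₁lt : ∀ a ∈ S₁, a ≤ 2*s-3 := by
        intro a ha
        have := hord a ha y hyS
        omega
      rcases mono01 s s (by omega) S₁ hc1 hd1 with hz1 | ho1
      · -- zeros ≤ 2s-3 means ⊆ [1, s-1]
        have hsub : S₁ ⊆ Finset.Icc 1 (s-1) := by
          intro x hx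
          have h1 := hz1 x hx
          unfold Pones at h1
          push_neg at h1
          have h2 := hS₁lt x hx
          have h3 := (hN x hx).1
          rw [Finset.mem_Icc]; omega
        have := Finset.card_le_card hsub
        rw [Nat.card_Icc] at this
        omega
      · -- ones ≤ 2s-3 means ⊆ [s, 2s-3]
        have hsub : S₁ ⊆ Finset.Icc s (2*s-3) := by
          intro x hx
          have h1 := ho1 x hx
          unfold Pones at h1
          have h2 := hS₁lt x hx
          rw [Finset.mem_Icc]
          rcases h1 with h | h
          · omega
          · omega
        have := Finset.card_le_card hsub
        rw [Nat.card_Icc] at this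
        omega
    · push_neg at hylow
      -- S₂ ⊆ [4s-2, 4s+r-4] : too few elements
      have hsub : S₂ ⊆ Finset.Icc (4*s-2) (4*s+r-4) := by
        intro y hy
        have h1 := ho2 y hy
        unfold Pones at h1
        have h2 := hylow y hy
        have h3 := (hN2 y hy).2
        rw [Finset.mem_Icc]
        rcases h1 with h | h
        · omega
        · omega
      have := Finset.card_le_card hsub
      rw [Nat.card_Icc] at this
      omega

end lower

theorem stmt5 (s r : ℕ) (hs : 3 ≤ s) (hsr : s ≤ r) (hr : r ≤ 2 * s - 2)
    (hg : 1 < Nat.gcd r s) (hr2 : s + s / Nat.gcd r s - 1 ≤ r) :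
    IsLeast {n : ℕ | ∀ Δ : ℕ → ℤ, ∃ S₁ S₂ : Finset ℕ,
    S₁ ⊆ Finset.Icc 1 n ∧ S₂ ⊆ Finset.Icc 1 n ∧
    ZeroSum Δ s S₁ ∧ ZeroSum Δ r S₂ ∧ S₁.card = s ∧ S₂.card = r ∧
    (∀ a ∈ S₁, ∀ b ∈ S₂, a < b) ∧ diam S₁ ≤ diam S₂} (4 * s + r - 3) := by
  constructor
  · intro Δ
    obtain ⟨S₁, S₂, h1, h2, h3, h4, h5, h6, h7, h8⟩ := upper s r hs hsr hr hg hr2 Δ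
    exact ⟨S₁, S₂, h1, h2, h3, h4, h5, h6, h7, h8⟩
  · intro n hn
    by_contra hlt
    push_neg at hlt
    obtain ⟨S₁, S₂, h1, h2, h3, h4, h5, h6, h7, h8⟩ := hn (Δ₀ s)
    refine lower_core s r hs hsr hr S₁ S₂ ?_ ?_ h3 h4 h5 h6 h7 h8
    · exact h1.trans (Finset.Icc_subset_Icc le_rfl (by omega))
    · exact h2.trans (Finset.Icc_subset_Icc le_rfl (by omega))
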